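/- arXiv:2203.07430 — 2 statements merged into one kernel-verified Lean document; each statement's English description precedes it below -/
import Mathlib

section
/- Let μ : ℝ^{n_z} → ℝ be differentiable with gradient satisfying J̲ ≤ ∇μ(z)ᵀ ≤ J̄ entrywise, and suppose each partial derivative has constant sign (JSS). Let μ_d(z₁,z₂) = μ(Dz₁ + (I−D)z₂) be the tight decomposition function with D selecting the nondecreasing coordinates. Then for any z̲ ≤ z̄, the inequality μ_d(z̄, z̲) − μ_d(z̲, z̄) ≤ F̄ (z̄ − z̲) holds, where F̄ := (J̄)⁺ + (J̲)⁻ is the row vector with entries max(J̄_j, 0) + max(−J̲_j, 0). -/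
/-- The selection map `D z₁ + (I − D) z₂` where `D` is the binary diagonal matrix
with `D_{jj} = 1` iff `j ∈ S` (the set of nondecreasing coordinates). -/
def sel {n : ℕ} (S : Set (Fin n)) [DecidablePred (· ∈ S)] (z₁ z₂ : Fin n → ℝ) : Fin n → ℝ :=
  fun j => if j ∈ S then z₁ j else z₂ j

/-!
By the mean value theorem on the segment from `sel S zlo zhi` to `sel S zhi zlo`, the increment
of `μ` is `∑ j, vⱼ ∂ⱼμ(z)` for some `z`, where `|vⱼ| = zhiⱼ - zloⱼ`. Bounding `∂ⱼμ(z)` by `Jhiⱼ`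
when `vⱼ ≥ 0` and by `Jloⱼ` when `vⱼ < 0` gives `vⱼ ∂ⱼμ(z) ≤ (Jhiⱼ⁺ + Jloⱼ⁻) |vⱼ|`.
-/

theorem ContinuousLinearMap.apply_eq_sum_mul_apply_single {ι : Type*} [Fintype ι]
    [DecidableEq ι] (L : (ι → ℝ) →L[ℝ] ℝ) (v : ι → ℝ) :
    L v = ∑ j, v j * L (Pi.single j 1) := by
  conv_lhs => rw [← Finset.univ_sum_single v]
  refine (map_sum L _ _).trans (Finset.sum_congr rfl fun j _ => ?_)
  have hsingle : Pi.single j (v j) = v j • (Pi.single j 1 : ι → ℝ) := by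
    rw [← Pi.single_smul, smul_eq_mul, mul_one]
  rw [hsingle, L.map_smul, smul_eq_mul]

theorem mul_le_max_add_max_mul_abs {lo g hi : ℝ} (hlo : lo ≤ g) (hhi : g ≤ hi) (x : ℝ) :
    x * g ≤ (max hi 0 + max (-lo) 0) * |x| := by
  rcases le_or_gt 0 x with hx | hx
  · rw [abs_of_nonneg hx]
    nlinarith [le_max_left hi 0, le_max_right (-lo) 0]
  · rw [abs_of_neg hx]
    nlinarith [le_max_left (-lo) 0, le_max_right hi 0]

theorem sub_le_sum_mul_abs_of_fderiv_single_mem_Icc {ι : Type*} [Fintype ι] [DecidableEq ι]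
    {μ : (ι → ℝ) → ℝ} (hdiff : Differentiable ℝ μ) {Jlo Jhi : ι → ℝ}
    (hJ : ∀ z j, Jlo j ≤ fderiv ℝ μ z (Pi.single j 1) ∧ fderiv ℝ μ z (Pi.single j 1) ≤ Jhi j)
    (a b : ι → ℝ) :
    μ a - μ b ≤ ∑ j, (max (Jhi j) 0 + max (-(Jlo j)) 0) * |a j - b j| := by
  obtain ⟨z, -, hz⟩ := domain_mvt (fun x _ => (hdiff x).hasFDerivAt.hasFDerivWithinAt)
    convex_univ (Set.mem_univ b) (Set.mem_univ a)
  rw [hz, ContinuousLinearMap.apply_eq_sum_mul_apply_single]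
  exact Finset.sum_le_sum fun j _ => mul_le_max_add_max_mul_abs (hJ z j).1 (hJ z j).2 _

theorem abs_sel_sub_sel {n : ℕ} (S : Set (Fin n)) [DecidablePred (· ∈ S)]
    (z₁ z₂ : Fin n → ℝ) (j : Fin n) :
    |sel S z₁ z₂ j - sel S z₂ z₁ j| = |z₁ j - z₂ j| := by
  unfold sel
  split_ifs
  · rfl
  · exact abs_sub_comm _ _

theorem stmt5_general {n : ℕ} (μ : (Fin n → ℝ) → ℝ) (hdiff : Differentiable ℝ μ)
    (Jlo Jhi : Fin n → ℝ)
    (hJ : ∀ z (j : Fin n), Jlo j ≤ fderiv ℝ μ z (Pi.single j 1) ∧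
      fderiv ℝ μ z (Pi.single j 1) ≤ Jhi j)
    -- Jacobian sign-stability: `S` collects the nondecreasing coordinates
    (S : Set (Fin n)) [DecidablePred (· ∈ S)] :
    ∀ zlo zhi : Fin n → ℝ, zlo ≤ zhi →
      μ (sel S zhi zlo) - μ (sel S zlo zhi) ≤
        ∑ j, (max (Jhi j) 0 + max (-(Jlo j)) 0) * (zhi j - zlo j) := by
  intro zlo zhi hle
  have habs : ∀ j, |sel S zhi zlo j - sel S zlo zhi j| = zhi j - zlo j := fun j => by
    rw [abs_sel_sub_sel, abs_of_nonneg (sub_nonneg.mpr (hle j))]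
  simpa only [habs] using sub_le_sum_mul_abs_of_fderiv_single_mem_Icc hdiff hJ
    (sel S zhi zlo) (sel S zlo zhi)

theorem stmt5 {n : ℕ} (μ : (Fin n → ℝ) → ℝ) (hdiff : Differentiable ℝ μ)
    (Jlo Jhi : Fin n → ℝ)
    (hJ : ∀ z (j : Fin n), Jlo j ≤ fderiv ℝ μ z (Pi.single j 1) ∧
      fderiv ℝ μ z (Pi.single j 1) ≤ Jhi j)
    -- Jacobian sign-stability: `S` collects the nondecreasing coordinates
    (S : Set (Fin n)) [DecidablePred (· ∈ S)]
    (hpos : ∀ z, ∀ j ∈ S, 0 ≤ fderiv ℝ μ z (Pi.single j 1))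
    (hneg : ∀ z, ∀ j ∉ S, fderiv ℝ μ z (Pi.single j 1) ≤ 0) :
    ∀ zlo zhi : Fin n → ℝ, zlo ≤ zhi →
      μ (sel S zhi zlo) - μ (sel S zlo zhi) ≤
        ∑ j, (max (Jhi j) 0 + max (-(Jlo j)) 0) * (zhi j - zlo j) :=
  stmt5_general μ hdiff Jlo Jhi hJ S
end

section
/- Let φ_d and ψ_d be DT mixed-monotone decomposition functions of φ : ℝ^n × ℝ^{n_w} → ℝ^n and ψ : ℝ^n × ℝ^{n_v} → ℝ^l respectively, and L ∈ ℝ^{n×l}. Then f_{νd}((x₁,w₁,v₁),(x₂,w₂,v₂)) := φ_d(x₁,w₁,x₂,w₂) − L⁺ ψ_d(x₂,v₂,x₁,v₁) + L⁻ ψ_d(x₁,v₁,x₂,v₂) is a DT mixed-monotone decomposition function of f_ν(x,w,v) := φ(x,w) − Lψ(x,v). -/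
/-!
DT decompositions are stable under precomposition with monotone maps, sums, and postcomposition
with monotone maps; postcomposition with an antitone map works once the two arguments are swapped. Writing `L = L⁺ - L⁻` with both parts entrywise nonnegative, `-L⁺ *ᵥ ·`
is antitone and `L⁻ *ᵥ ·` is monotone, which assembles the decomposition of `φ - L ψ`.
-/

open Matrix

/-- Entrywise positive part of a matrix: `M⁺ = max(M, 0)`. -/
def mpos {m n : ℕ} (M : Matrix (Fin m) (Fin n) ℝ) : Matrix (Fin m) (Fin n) ℝ :=
  fun i j => max (M i j) 0

/-- Entrywise negative part of a matrix: `M⁻ = M⁺ − M`. -/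
def mneg {m n : ℕ} (M : Matrix (Fin m) (Fin n) ℝ) : Matrix (Fin m) (Fin n) ℝ :=
  mpos M - M

/-- `gd` is a DT mixed-monotone decomposition function of `g` (on the whole space):
agreement on the diagonal, componentwise nondecreasing in the first argument,
componentwise nonincreasing in the second argument. -/
def IsDTDecomp {α β : Type*} [Preorder α] [Preorder β] (g : α → β) (gd : α → α → β) : Prop :=
  (∀ z, gd z z = g z) ∧
  (∀ z₁ z₁' z₂, z₁ ≤ z₁' → gd z₁ z₂ ≤ gd z₁' z₂) ∧
  (∀ z₁ z₂ z₂', z₂ ≤ z₂' → gd z₁ z₂' ≤ gd z₁ z₂)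

namespace IsDTDecomp

variable {α β γ : Type*} [Preorder α] [Preorder β] [Preorder γ] {g : α → β} {gd : α → α → β}

theorem comp_monotone (hg : IsDTDecomp g gd) {π : γ → α} (hπ : Monotone π) :
    IsDTDecomp (g ∘ π) fun p q => gd (π p) (π q) :=
  ⟨fun z => hg.1 (π z), fun _ _ _ h => hg.2.1 _ _ _ (hπ h), fun _ _ _ h => hg.2.2 _ _ _ (hπ h)⟩

theorem monotone_comp (hg : IsDTDecomp g gd) {T : β → γ} (hT : Monotone T) :
    IsDTDecomp (T ∘ g) fun p q => T (gd p q) :=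
  ⟨fun z => congrArg T (hg.1 z), fun _ _ _ h => hT (hg.2.1 _ _ _ h),
    fun _ _ _ h => hT (hg.2.2 _ _ _ h)⟩

theorem antitone_comp (hg : IsDTDecomp g gd) {T : β → γ} (hT : Antitone T) :
    IsDTDecomp (T ∘ g) fun p q => T (gd q p) :=
  ⟨fun z => congrArg T (hg.1 z), fun _ _ _ h => hT (hg.2.2 _ _ _ h),
    fun _ _ _ h => hT (hg.2.1 _ _ _ h)⟩

theorem add [AddCommMonoid β] [IsOrderedAddMonoid β] (hg : IsDTDecomp g gd)
    {h : α → β} {hd : α → α → β} (hh : IsDTDecomp h hd) :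
    IsDTDecomp (g + h) (gd + hd) :=
  ⟨fun z => congrArg₂ (· + ·) (hg.1 z) (hh.1 z),
    fun _ _ _ hz => add_le_add (hg.2.1 _ _ _ hz) (hh.2.1 _ _ _ hz),
    fun _ _ _ hz => add_le_add (hg.2.2 _ _ _ hz) (hh.2.2 _ _ _ hz)⟩

end IsDTDecomp

theorem Matrix.mulVec_monotone_of_nonneg {m n R : Type*} [Fintype n] [Semiring R] [PartialOrder R]
    [IsOrderedRing R] {A : Matrix m n R} (hA : ∀ i j, 0 ≤ A i j) : Monotone (A *ᵥ ·) :=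
  fun _ _ h i => dotProduct_le_dotProduct_of_nonneg_left h (hA i)

section PosNegParts

variable {m n : ℕ} (M : Matrix (Fin m) (Fin n) ℝ)

theorem mpos_nonneg (i j) : 0 ≤ mpos M i j :=
  le_max_right (M i j) 0

theorem mneg_nonneg (i j) : 0 ≤ mneg M i j := by
  simp [mneg, mpos]

theorem mpos_sub_mneg : mpos M - mneg M = M :=
  sub_sub_cancel (mpos M) M

end PosNegParts

theorem stmt8 {n l nw nv : ℕ}
    (φ : (Fin n → ℝ) × (Fin nw → ℝ) → Fin n → ℝ)
    (φd : ((Fin n → ℝ) × (Fin nw → ℝ)) → ((Fin n → ℝ) × (Fin nw → ℝ)) → Fin n → ℝ)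
    (ψ : (Fin n → ℝ) × (Fin nv → ℝ) → Fin l → ℝ)
    (ψd : ((Fin n → ℝ) × (Fin nv → ℝ)) → ((Fin n → ℝ) × (Fin nv → ℝ)) → Fin l → ℝ)
    (L : Matrix (Fin n) (Fin l) ℝ)
    (hφ : IsDTDecomp φ φd) (hψ : IsDTDecomp ψ ψd) :
    IsDTDecomp
      (fun p : (Fin n → ℝ) × (Fin nw → ℝ) × (Fin nv → ℝ) =>
        φ (p.1, p.2.1) - L *ᵥ ψ (p.1, p.2.2))
      (fun p q =>
        φd (p.1, p.2.1) (q.1, q.2.1)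
          - mpos L *ᵥ ψd (q.1, q.2.2) (p.1, p.2.2)
          + mneg L *ᵥ ψd (p.1, p.2.2) (q.1, q.2.2)) := by
  have hφ' := hφ.comp_monotone (π := fun p : (Fin n → ℝ) × (Fin nw → ℝ) × (Fin nv → ℝ) =>
    (p.1, p.2.1)) fun _ _ h => ⟨h.1, h.2.1⟩
  have hψ' := hψ.comp_monotone (π := fun p : (Fin n → ℝ) × (Fin nw → ℝ) × (Fin nv → ℝ) =>
    (p.1, p.2.2)) fun _ _ h => ⟨h.1, h.2.2⟩
  have hpos : Antitone (fun v => -(mpos L *ᵥ v)) :=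
    (mulVec_monotone_of_nonneg (mpos_nonneg L)).neg
  have hsum := (hφ'.add (hψ'.antitone_comp hpos)).add
    (hψ'.monotone_comp (mulVec_monotone_of_nonneg (mneg_nonneg L)))
  convert hsum using 1
  · funext p
    rw [Pi.add_apply, Pi.add_apply, ← mpos_sub_mneg L, sub_mulVec, mpos_sub_mneg]
    simp only [Function.comp_apply]
    abel
  · funext p q
    simp only [Pi.add_apply, sub_eq_add_neg]
end
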